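/- arXiv:2307.05054 — 4 statements merged into one kernel-verified Lean document; each statement's English description precedes it below -/
import Mathlib

section
/- Let Γ = (S, A, Ω, p, u) be an information aggregation game and let M = (Id_Ω, …, Id_Ω, m_d, Id_A) be an honest mechanism for Γ. Then M is incentive-compatible for the receiver (i.e., the receiver cannot strictly increase its expected utility by deviating from playing the mediator's recommendation) if and only if E_r(o_M) ≥ U_a for every action a ∈ A. -/
open Finset

/-- An information aggregation game with `n` senders and finite state space `Ω`.
The binary action set `A = {0,1}` is modelled by `Bool` (`false` = action `0`,
`true` = action `1`).  Player `some i` is sender `i`; player `none` is the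
receiver. -/
structure IAGame (n : ℕ) (Ω : Type*) [Fintype Ω] where
  /-- the (commonly known) prior distribution on states -/
  p : Ω → ℝ
  p_nonneg : ∀ ω, 0 ≤ p ω
  p_sum_one : ∑ ω, p ω = 1
  /-- `u j ω a` : utility of player `j` when action `a` is played at state `ω` -/
  u : Option (Fin n) → Ω → Bool → ℝ

/-- A mechanism for an information aggregation game: (possibly randomized)
sender strategies (`send i ω m` is the probability that sender `i` reports
message `m` when the state is `ω`), a (possibly randomized) mediator rule
(`med m` is the probability that the mediator recommends action `0` on the
message profile `m`; action `1` is recommended with the remaining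
probability), and a receiver strategy `recv` mapping the mediator's
recommendation to the action actually played. -/
structure Mech (n : ℕ) (Ω : Type*) [Fintype Ω] where
  send : Fin n → Ω → Ω → ℝ
  send_nonneg : ∀ i ω m, 0 ≤ send i ω m
  send_sum_one : ∀ i ω, ∑ m, send i ω m = 1
  med : (Fin n → Ω) → ℝ
  med_nonneg : ∀ m, 0 ≤ med m
  med_le_one : ∀ m, med m ≤ 1
  recv : Bool → Bool

variable {n : ℕ} {Ω : Type*} [Fintype Ω] [DecidableEq Ω]

namespace Mech

/-- Probability that the action finally played by the receiver is `0`
(= `false`), given that the mediator received the message profile `m`. -/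
def actFalse (M : Mech n Ω) (m : Fin n → Ω) : ℝ :=
  (if M.recv false = false then M.med m else 0) +
  (if M.recv true = false then 1 - M.med m else 0)

/-- Probability that the message profile `m` is sent when the state is `ω`
(the senders randomize independently). -/
def profProb (M : Mech n Ω) (ω : Ω) (m : Fin n → Ω) : ℝ :=
  ∏ i, M.send i ω (m i)

/-- The outcome implemented by a mechanism: `M.out ω` is the probability that
the action finally played is `0` at state `ω`.  (Since `A = {0,1}`, a
distribution on `A` is identified with the probability it gives to `0`, so
`M.out : Ω → ℝ` faithfully represents the map `o_M : Ω → Δ(A)`.) -/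
def out (M : Mech n Ω) (ω : Ω) : ℝ :=
  ∑ m : Fin n → Ω, M.profProb ω m * M.actFalse m

/-- The mechanism in which the receiver unilaterally deviates to strategy `g`. -/
def withRecv (M : Mech n Ω) (g : Bool → Bool) : Mech n Ω :=
  { M with recv := g }

/-- The mechanism in which sender `i` unilaterally deviates to the (possibly
randomized) strategy `s`. -/
def devSend (M : Mech n Ω) (i : Fin n) (s : Ω → Ω → ℝ)
    (h1 : ∀ ω m, 0 ≤ s ω m) (h2 : ∀ ω, ∑ m, s ω m = 1) : Mech n Ω where
  send := fun j => if j = i then s else M.send j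
  send_nonneg := by
    intro j ω m
    by_cases h : j = i
    · simpa [h] using h1 ω m
    · simpa [h] using M.send_nonneg j ω m
  send_sum_one := by
    intro j ω
    by_cases h : j = i
    · simpa [h] using h2 ω
    · simpa [h] using M.send_sum_one j ω
  med := M.med
  med_nonneg := M.med_nonneg
  med_le_one := M.med_le_one
  recv := M.recv

/-- A mechanism is honest if every sender truthfully reports the state with
probability one and the receiver plays the mediator's recommendation. -/
def Honest (M : Mech n Ω) : Prop :=
  (∀ i ω m, M.send i ω m = if m = ω then 1 else 0) ∧ M.recv = id

end Mech

namespace IAGame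

/-- Expected utility of player `j` at state `ω` when action `0` is played with
probability `q` (and action `1` with probability `1 - q`). -/
def lin (G : IAGame n Ω) (j : Option (Fin n)) (ω : Ω) (q : ℝ) : ℝ :=
  q * G.u j ω false + (1 - q) * G.u j ω true

/-- `U_a` : the receiver's expected utility from always playing action `a`. -/
def Uconst (G : IAGame n Ω) (a : Bool) : ℝ :=
  ∑ ω, G.p ω * G.u none ω a

/-- `E_j(o)` : expected utility of player `j` under the outcome `o`, where
`o ω` is the probability that action `0` is played at state `ω`. -/
def EUout (G : IAGame n Ω) (j : Option (Fin n)) (o : Ω → ℝ) : ℝ :=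
  ∑ ω, G.p ω * G.lin j ω (o ω)

/-- Expected utility of player `j` when the mechanism `M` is played. -/
def EU (G : IAGame n Ω) (M : Mech n Ω) (j : Option (Fin n)) : ℝ :=
  ∑ ω, G.p ω * ∑ m : Fin n → Ω, M.profProb ω m * G.lin j ω (M.actFalse m)

/-- A mechanism is incentive-compatible if neither the receiver nor any single
sender can strictly increase its expected utility by unilaterally deviating
(the mediator's rule being fixed). -/
def IC (G : IAGame n Ω) (M : Mech n Ω) : Prop :=
  (∀ g : Bool → Bool, G.EU (M.withRecv g) none ≤ G.EU M none) ∧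
  (∀ (i : Fin n) (s : Ω → Ω → ℝ) (h1 : ∀ ω m, 0 ≤ s ω m)
      (h2 : ∀ ω, ∑ m, s ω m = 1),
      G.EU (M.devSend i s h1 h2) (some i) ≤ G.EU M (some i))

/-- A mechanism is truthful if it is honest and incentive-compatible. -/
def Truthful (G : IAGame n Ω) (M : Mech n Ω) : Prop :=
  M.Honest ∧ G.IC M

/-- The honest reporting distribution on message profiles: at state `ω` the
profile `(ω, …, ω)` is sent with probability one. -/
def honestRep : Ω → (Fin n → Ω) → ℝ :=
  fun ω m => if m = (fun _ => ω) then 1 else 0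

/-- `τ` is a valid joint (possibly randomized, possibly correlated) deviation
of the coalition `K` from honest reporting: `τ ω` is a probability
distribution on message profiles, and senders outside `K` keep reporting the
true state. -/
def IsDev (K : Finset (Fin n)) (τ : Ω → (Fin n → Ω) → ℝ) : Prop :=
  (∀ ω m, 0 ≤ τ ω m) ∧ (∀ ω, ∑ m : Fin n → Ω, τ ω m = 1) ∧
  (∀ ω m, τ ω m ≠ 0 → ∀ i, i ∉ K → m i = ω)

/-- Expected utility of sender `i` when the senders' reports are distributed
according to `τ`, the mediator uses the rule `f` (`f m` = probability of
recommending action `0` on the message profile `m`) and the receiver obeys the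
mediator's recommendation. -/
def senderEU (G : IAGame n Ω) (f : (Fin n → Ω) → ℝ) (i : Fin n)
    (τ : Ω → (Fin n → Ω) → ℝ) : ℝ :=
  ∑ ω, G.p ω * ∑ m : Fin n → Ω, τ ω m * G.lin (some i) ω (f m)

/-- The honest mechanism with mediator rule `f` is `k`-resilient
incentive-compatible for the senders: no (nonempty) coalition of at most `k`
senders has a joint deviation strictly increasing the expected utility of
every member; i.e., for every coalition and every deviation, some member of
the coalition does not strictly increase its expected utility. -/
def KResSenders (G : IAGame n Ω) (f : (Fin n → Ω) → ℝ) (k : ℕ) : Prop :=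
  ∀ K : Finset (Fin n), K.Nonempty → K.card ≤ k →
    ∀ τ : Ω → (Fin n → Ω) → ℝ, IsDev K τ →
      ∃ i ∈ K, G.senderEU f i τ ≤ G.senderEU f i honestRep

/-- The honest mechanism with mediator rule `f` is strong `k`-resilient
incentive-compatible for the senders: for every (nonempty) coalition of at
most `k` senders and every joint deviation, no member of the coalition
strictly increases its expected utility. -/
def StrongKResSenders (G : IAGame n Ω) (f : (Fin n → Ω) → ℝ) (k : ℕ) : Prop :=
  ∀ K : Finset (Fin n), K.Nonempty → K.card ≤ k →
    ∀ τ : Ω → (Fin n → Ω) → ℝ, IsDev K τ →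
      ∀ i ∈ K, G.senderEU f i τ ≤ G.senderEU f i honestRep

/-- A (honest) mechanism is `k`-resilient incentive-compatible if (a) the
receiver cannot strictly increase its expected utility by deviating, and
(b) the senders' honest strategy profile is a `k`-resilient Nash equilibrium
(with the mediator rule and the receiver strategy fixed). -/
def KResIC (G : IAGame n Ω) (M : Mech n Ω) (k : ℕ) : Prop :=
  (∀ g : Bool → Bool, G.EU (M.withRecv g) none ≤ G.EU M none) ∧
  G.KResSenders M.med k

/-- Strong `k`-resilient incentive compatibility. -/
def StrongKResIC (G : IAGame n Ω) (M : Mech n Ω) (k : ℕ) : Prop :=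
  (∀ g : Bool → Bool, G.EU (M.withRecv g) none ≤ G.EU M none) ∧
  G.StrongKResSenders M.med k

/-- A mechanism is `k`-resilient truthful if it is honest and `k`-resilient
incentive-compatible. -/
def KResTruthful (G : IAGame n Ω) (M : Mech n Ω) (k : ℕ) : Prop :=
  M.Honest ∧ G.KResIC M k

/-- A mechanism is strong `k`-resilient truthful if it is honest and strong
`k`-resilient incentive-compatible. -/
def StrongKResTruthful (G : IAGame n Ω) (M : Mech n Ω) (k : ℕ) : Prop :=
  M.Honest ∧ G.StrongKResIC M k

/-- Sender `i` strictly prefers action `a` to the other action in state `ω`. -/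
def SPrefers (G : IAGame n Ω) (i : Fin n) (ω : Ω) (a : Bool) : Prop :=
  G.u (some i) ω (!a) < G.u (some i) ω a

/-- Sender `i` weakly prefers action `a` to the other action in state `ω`. -/
def WPrefers (G : IAGame n Ω) (i : Fin n) (ω : Ω) (a : Bool) : Prop :=
  G.u (some i) ω (!a) ≤ G.u (some i) ω a

end IAGame

/-- `C(m, m')` : the set of senders whose messages differ in the two message
profiles `m` and `m'`. -/
def diffSet (m m' : Fin n → Ω) : Finset (Fin n) :=
  univ.filter fun i => m i ≠ m' i

namespace IAGame

/-- The relation `m ≺ₖ m'` : the set `C` of senders whose messages differ has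
size at most `k`, and either (a) `m` is `ω`-pure for some `ω` and every sender
in `C` strictly prefers action `1` to action `0` in state `ω`, or (b) `m'` is
`ω`-pure for some `ω` and every sender in `C` strictly prefers action `0` to
action `1` in state `ω`. -/
def Prec (G : IAGame n Ω) (k : ℕ) (m m' : Fin n → Ω) : Prop :=
  (diffSet m m').card ≤ k ∧
  ((∃ ω : Ω, m = (fun _ => ω) ∧ ∀ i ∈ diffSet m m', G.SPrefers i ω true) ∨
   (∃ ω : Ω, m' = (fun _ => ω) ∧ ∀ i ∈ diffSet m m', G.SPrefers i ω false))

/-- The relation `m ≺ₖˢ m'` (the strong variant): the set `C` of senders whose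
messages differ has size at most `k`, and either (a) `m` is `ω`-pure for some
`ω` and at least one sender in `C` strictly prefers `1` to `0` in `ω`, or (b)
`m'` is `ω`-pure for some `ω` and at least one sender in `C` strictly prefers
`0` to `1` in `ω`. -/
def PrecS (G : IAGame n Ω) (k : ℕ) (m m' : Fin n → Ω) : Prop :=
  (diffSet m m').card ≤ k ∧
  ((∃ ω : Ω, m = (fun _ => ω) ∧ ∃ i ∈ diffSet m m', G.SPrefers i ω true) ∨
   (∃ ω : Ω, m' = (fun _ => ω) ∧ ∃ i ∈ diffSet m m', G.SPrefers i ω false))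

/-- `ω ≤ₖ ω'` : there is a chain `ω⃗ ≺ₖ m⃗¹ ≺ₖ ⋯ ≺ₖ m⃗ᵗ ≺ₖ ω⃗'` from the
`ω`-pure input to the `ω'`-pure input. -/
def LeK (G : IAGame n Ω) (k : ℕ) (ω ω' : Ω) : Prop :=
  Relation.TransGen (G.Prec k) (fun _ => ω) (fun _ => ω')

/-- `ω ≤ₖˢ ω'` : the strong variant of `≤ₖ`. -/
def LeKS (G : IAGame n Ω) (k : ℕ) (ω ω' : Ω) : Prop :=
  Relation.TransGen (G.PrecS k) (fun _ => ω) (fun _ => ω')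

end IAGame

/-! With truthful senders the mediator sees the profile `(ω, …, ω)`, so a receiver strategy
`g` turns the mediator's outcome `q ω = M.med (ω, …, ω)` into one of `q`, `1`, `0` or `1 - q`.
The constant strategies earn exactly `U_0` and `U_1`; as utilities are affine in the
probability of playing `0`, the outcomes `q` and `1 - q` together earn `U_0 + U_1`, so
flipping the recommendation does not pay either once `E_r(q) ≥ U_0, U_1`. -/

namespace Mech

theorem profProb_of_send {M : Mech n Ω} (hs : ∀ i ω m, M.send i ω m = if m = ω then 1 else 0)
    (ω : Ω) (m : Fin n → Ω) : M.profProb ω m = if m = fun _ => ω then 1 else 0 := by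
  simp only [profProb, hs, Fintype.prod_boole, funext_iff]
  congr

theorem sum_profProb_mul_of_send {M : Mech n Ω}
    (hs : ∀ i ω m, M.send i ω m = if m = ω then 1 else 0) (ω : Ω) (X : (Fin n → Ω) → ℝ) :
    ∑ m, M.profProb ω m * X m = X fun _ => ω := by
  simp only [profProb_of_send hs, ite_mul, one_mul, zero_mul, Finset.sum_ite_eq', mem_univ,
    if_true]

theorem out_of_send {M : Mech n Ω} (hs : ∀ i ω m, M.send i ω m = if m = ω then 1 else 0)
    (ω : Ω) : M.out ω = M.actFalse fun _ => ω :=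
  sum_profProb_mul_of_send hs ω M.actFalse

section Receiver

variable {n : ℕ} {Ω : Type*} [Fintype Ω] (M : Mech n Ω) (m : Fin n → Ω)

theorem actFalse_of_recv_eq_id {M : Mech n Ω} (hr : M.recv = id) (m : Fin n → Ω) :
    M.actFalse m = M.med m := by
  simp [actFalse, hr]

theorem actFalse_withRecv_id : (M.withRecv id).actFalse m = M.med m :=
  actFalse_of_recv_eq_id rfl m

theorem actFalse_withRecv_const_false : (M.withRecv fun _ => false).actFalse m = 1 := by
  simp [actFalse, withRecv]

theorem actFalse_withRecv_const_true : (M.withRecv fun _ => true).actFalse m = 0 := by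
  simp [actFalse, withRecv]

theorem actFalse_withRecv_not : (M.withRecv not).actFalse m = 1 - M.med m := by
  simp [actFalse, withRecv]

end Receiver

end Mech

theorem Bool.eq_id_or_const_or_not (g : Bool → Bool) :
    g = id ∨ g = (fun _ => false) ∨ g = (fun _ => true) ∨ g = not := by
  cases hf : g false <;> cases ht : g true <;> simp only [funext_iff, Bool.forall_bool] <;>
    simp [hf, ht]

namespace IAGame

theorem EU_of_send (G : IAGame n Ω) {M : Mech n Ω}
    (hs : ∀ i ω m, M.send i ω m = if m = ω then 1 else 0) (j : Option (Fin n)) :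
    G.EU M j = G.EUout j fun ω => M.actFalse fun _ => ω := by
  simp only [EU, EUout, M.sum_profProb_mul_of_send hs]

section Affine

variable {n : ℕ} {Ω : Type*} [Fintype Ω] (G : IAGame n Ω)

theorem EUout_const_one : G.EUout none (fun _ => 1) = G.Uconst false := by
  simp [EUout, Uconst, lin]

theorem EUout_const_zero : G.EUout none (fun _ => 0) = G.Uconst true := by
  simp [EUout, Uconst, lin]

theorem lin_add_lin_one_sub (j : Option (Fin n)) (ω : Ω) (q : ℝ) :
    G.lin j ω q + G.lin j ω (1 - q) = G.lin j ω 1 + G.lin j ω 0 := by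
  simp only [lin]; ring

theorem EUout_add_EUout_one_sub (j : Option (Fin n)) (o : Ω → ℝ) :
    G.EUout j o + G.EUout j (fun ω => 1 - o ω) =
      G.EUout j (fun _ => 1) + G.EUout j (fun _ => 0) := by
  simp only [EUout, ← Finset.sum_add_distrib, ← mul_add, lin_add_lin_one_sub]

theorem EUout_one_sub_le (o : Ω → ℝ) (h : ∀ a, G.Uconst a ≤ G.EUout none o) :
    G.EUout none (fun ω => 1 - o ω) ≤ G.EUout none o := by
  have := G.EUout_add_EUout_one_sub none o
  rw [EUout_const_one, EUout_const_zero] at this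
  linarith [h false, h true]

end Affine

end IAGame

/-- An honest mechanism `M` is incentive-compatible for the
receiver (the receiver cannot strictly increase its expected utility by
deviating from playing the mediator's recommendation) if and only if
`E_r(o_M) ≥ U_a` for every action `a`. -/
theorem statement1 {n : ℕ} {Ω : Type*} [Fintype Ω] [DecidableEq Ω]
    (G : IAGame n Ω) (M : Mech n Ω) (hM : M.Honest) :
    (∀ g : Bool → Bool, G.EU (M.withRecv g) none ≤ G.EU M none) ↔
      (∀ a : Bool, G.Uconst a ≤ G.EUout none M.out) := by
  obtain ⟨hs, hr⟩ := hM
  have hEU (g : Bool → Bool) : G.EU (M.withRecv g) none =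
      G.EUout none fun ω => (M.withRecv g).actFalse fun _ => ω :=
    G.EU_of_send (M := M.withRecv g) hs none
  have hEUM : G.EU M none = G.EUout none fun ω => M.med fun _ => ω := by
    simp only [G.EU_of_send hs, Mech.actFalse_of_recv_eq_id hr]
  have hout : M.out = fun ω => M.med fun _ => ω := by
    funext ω; rw [M.out_of_send hs, Mech.actFalse_of_recv_eq_id hr]
  rw [hEUM, hout]
  constructor
  · intro h a
    cases a
    · simpa only [hEU, Mech.actFalse_withRecv_const_false, G.EUout_const_one] using
        h fun _ => false
    · simpa only [hEU, Mech.actFalse_withRecv_const_true, G.EUout_const_zero] using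
        h fun _ => true
  · intro h g
    rcases Bool.eq_id_or_const_or_not g with rfl | rfl | rfl | rfl
    · simp only [hEU, Mech.actFalse_withRecv_id, le_refl]
    · simpa only [hEU, Mech.actFalse_withRecv_const_false, G.EUout_const_one] using h false
    · simpa only [hEU, Mech.actFalse_withRecv_const_true, G.EUout_const_zero] using h true
    · simpa only [hEU, Mech.actFalse_withRecv_not] using G.EUout_one_sub_le _ h
end

section
/- Let Γ = (S, A, Ω, p, u) be an information aggregation game with |S| > 2. Then an outcome o : Ω → Δ(A) of Γ is implementable by a truthful mechanism if and only if E_r(o) ≥ U_a for every action a ∈ A. -/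
open Finset

variable {n : ℕ} {Ω : Type*} [Fintype Ω] [DecidableEq Ω]

/-! Under honest reporting, obeying the mediator earns the receiver `E_r(o)` while ignoring it
and always playing `a` earns `U_a`, so the condition is necessary. Conversely, with three or more
senders the mediator can read off the state in a way no single misreport can move, so lying gains
a sender nothing; and the receiver's only remaining deviation, disobeying every recommendation,
earns `U_0 + U_1 - E_r(o) ≤ E_r(o)`. -/

namespace Mech

def HonestSenders (M : Mech n Ω) : Prop :=
  ∀ i ω m, M.send i ω m = if m = ω then 1 else 0

omit [DecidableEq Ω] in
theorem sum_profProb (M : Mech n Ω) (ω : Ω) : ∑ m : Fin n → Ω, M.profProb ω m = 1 := by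
  simp only [profProb, ← Fintype.prod_sum, M.send_sum_one, prod_const_one]

omit [DecidableEq Ω] in
theorem sum_profProb_mul_const (M : Mech n Ω) (ω : Ω) (c : ℝ) :
    ∑ m : Fin n → Ω, M.profProb ω m * c = c := by
  rw [← sum_mul, sum_profProb, one_mul]

omit [DecidableEq Ω] in
theorem profProb_eq_zero {M : Mech n Ω} {ω : Ω} {m : Fin n → Ω} (j : Fin n)
    (h : M.send j ω (m j) = 0) : M.profProb ω m = 0 :=
  prod_eq_zero (mem_univ j) h

theorem HonestSenders.profProb {M : Mech n Ω} (hs : M.HonestSenders) (ω : Ω)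
    (m : Fin n → Ω) : M.profProb ω m = if m = (fun _ => ω) then 1 else 0 := by
  rw [Mech.profProb, prod_congr rfl fun i _ => hs i ω (m i), prod_boole]
  simp only [mem_univ, true_implies, funext_iff]

theorem HonestSenders.sum_profProb_mul {M : Mech n Ω} (hs : M.HonestSenders) (ω : Ω)
    (F : (Fin n → Ω) → ℝ) : ∑ m : Fin n → Ω, M.profProb ω m * F m = F (fun _ => ω) := by
  simp only [hs.profProb, boole_mul, sum_ite_eq', mem_univ, if_true]

theorem HonestSenders.out {M : Mech n Ω} (hs : M.HonestSenders) (ω : Ω) :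
    M.out ω = M.actFalse (fun _ => ω) :=
  hs.sum_profProb_mul ω _

theorem HonestSenders.withRecv {M : Mech n Ω} (hs : M.HonestSenders) (g : Bool → Bool) :
    (M.withRecv g).HonestSenders :=
  hs

theorem HonestSenders.eq_of_profProb_devSend_ne_zero {M : Mech n Ω} (hs : M.HonestSenders) {i : Fin n}
    {s : Ω → Ω → ℝ} {h1 : ∀ ω m, 0 ≤ s ω m} {h2 : ∀ ω, ∑ m, s ω m = 1} {ω : Ω}
    {m : Fin n → Ω} (hm : (M.devSend i s h1 h2).profProb ω m ≠ 0) :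
    ∀ j ≠ i, m j = ω := by
  intro j hji
  by_contra hne
  refine hm (profProb_eq_zero j ?_)
  simp [devSend, hji, hs j ω (m j), hne]

omit [DecidableEq Ω] in
@[simp]
theorem profProb_withRecv (M : Mech n Ω) (g : Bool → Bool) :
    (M.withRecv g).profProb = M.profProb :=
  rfl

omit [DecidableEq Ω] in
theorem withRecv_self (M : Mech n Ω) : M.withRecv M.recv = M :=
  rfl

omit [DecidableEq Ω] in
theorem out_withRecv_const (M : Mech n Ω) (a : Bool) :
    (M.withRecv fun _ => a).out = fun _ => if a then 0 else 1 := by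
  funext ω
  cases a <;> simp [Mech.out, actFalse, withRecv, sum_profProb]

omit [DecidableEq Ω] in
theorem out_withRecv_not {M : Mech n Ω} (hr : M.recv = id) :
    (M.withRecv not).out = 1 - M.out := by
  funext ω
  simp only [Mech.out, profProb_withRecv]
  simp [Mech.out, actFalse, withRecv, hr, mul_sub, sum_profProb]

end Mech

namespace IAGame

omit [DecidableEq Ω] in
theorem EUout_one (G : IAGame n Ω) : G.EUout none 1 = G.Uconst false := by
  simp [EUout, Uconst, lin]

omit [DecidableEq Ω] in
theorem EUout_zero (G : IAGame n Ω) : G.EUout none 0 = G.Uconst true := by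
  simp [EUout, Uconst, lin]

omit [DecidableEq Ω] in
theorem EUout_one_sub_add (G : IAGame n Ω) (j : Option (Fin n)) (o : Ω → ℝ) :
    G.EUout j (1 - o) + G.EUout j o = G.EUout j 1 + G.EUout j 0 := by
  simp only [EUout, lin, ← sum_add_distrib, Pi.sub_apply, Pi.one_apply, Pi.zero_apply]
  exact sum_congr rfl fun ω _ => by ring

theorem EU_eq_EUout_out (G : IAGame n Ω) {M : Mech n Ω} (hs : M.HonestSenders)
    (j : Option (Fin n)) : G.EU M j = G.EUout j M.out := by
  simp only [EU, EUout, hs.sum_profProb_mul, hs.out]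

theorem EU_withRecv_const (G : IAGame n Ω) {M : Mech n Ω} (hs : M.HonestSenders) (a : Bool) :
    G.EU (M.withRecv fun _ => a) none = G.Uconst a := by
  rw [G.EU_eq_EUout_out (hs.withRecv _), Mech.out_withRecv_const]
  cases a
  · exact G.EUout_one
  · exact G.EUout_zero

theorem Uconst_le_EUout_out_of_truthful (G : IAGame n Ω) {M : Mech n Ω} (hM : G.Truthful M)
    (a : Bool) : G.Uconst a ≤ G.EUout none M.out := by
  obtain ⟨⟨hs, -⟩, hrecv, -⟩ := hM
  rw [← G.EU_withRecv_const hs a, ← G.EU_eq_EUout_out hs]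
  exact hrecv _

theorem EU_withRecv_le (G : IAGame n Ω) {M : Mech n Ω} (hs : M.HonestSenders)
    (hr : M.recv = id) (hU : ∀ a, G.Uconst a ≤ G.EU M none) (g : Bool → Bool) :
    G.EU (M.withRecv g) none ≤ G.EU M none := by
  have hg : g = id ∨ g = not ∨ g = (fun _ => true) ∨ g = (fun _ => false) := by
    revert g; decide
  rcases hg with rfl | rfl | rfl | rfl
  · rw [← hr, M.withRecv_self]
  · have hnot := G.EUout_one_sub_add none M.out
    rw [G.EUout_one, G.EUout_zero] at hnot
    rw [G.EU_eq_EUout_out (hs.withRecv _), Mech.out_withRecv_not hr]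
    rw [G.EU_eq_EUout_out hs] at hU ⊢
    linarith [hU true, hU false]
  · rw [G.EU_withRecv_const hs]; exact hU true
  · rw [G.EU_withRecv_const hs]; exact hU false

theorem EU_devSend_eq (G : IAGame n Ω) {M : Mech n Ω} (hs : M.HonestSenders)
    (hrobust : ∀ i ω (m : Fin n → Ω), (∀ j ≠ i, m j = ω) → M.actFalse m = M.actFalse fun _ => ω)
    (i : Fin n) (s : Ω → Ω → ℝ) (h1 : ∀ ω m, 0 ≤ s ω m) (h2 : ∀ ω, ∑ m, s ω m = 1)
    (j : Option (Fin n)) : G.EU (M.devSend i s h1 h2) j = G.EU M j := by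
  simp only [EU, hs.sum_profProb_mul]
  refine sum_congr rfl fun ω _ => congrArg (G.p ω * ·) ?_
  rw [← Mech.sum_profProb_mul_const (M.devSend i s h1 h2) ω (G.lin j ω (M.actFalse fun _ => ω))]
  refine sum_congr rfl fun m _ => ?_
  by_cases hm : (M.devSend i s h1 h2).profProb ω m = 0
  · simp [hm]
  · rw [← hrobust i ω m (hs.eq_of_profProb_devSend_ne_zero hm)]
    rfl

end IAGame

/-- One misreport leaves two of the first three reports truthful, so it cannot move this
estimate of the state. -/
def robustState (hn : 2 < n) (m : Fin n → Ω) : Ω :=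
  if m ⟨0, by omega⟩ = m ⟨1, by omega⟩ then m ⟨0, by omega⟩ else m ⟨2, hn⟩

omit [Fintype Ω] in
theorem robustState_eq_of_forall_ne (hn : 2 < n) {i : Fin n} {ω : Ω} {m : Fin n → Ω}
    (h : ∀ j ≠ i, m j = ω) : robustState hn m = ω := by
  have hi : ∀ a b : Fin n, a ≠ b → m a = ω ∨ m b = ω := fun a b hab =>
    (eq_or_ne a i).elim (fun hai => .inr (h b (hai ▸ hab.symm))) (fun hai => .inl (h a hai))
  unfold robustState
  split_ifs with h01
  · rcases hi ⟨0, by omega⟩ ⟨1, by omega⟩ (by simp [Fin.ext_iff]) with h0 | h1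
    · exact h0
    · exact h01.trans h1
  · rcases hi ⟨0, by omega⟩ ⟨2, hn⟩ (by simp [Fin.ext_iff]) with h0 | h2
    · rcases hi ⟨1, by omega⟩ ⟨2, hn⟩ (by simp [Fin.ext_iff]) with h1 | h2
      · exact absurd (h0.trans h1.symm) h01
      · exact h2
    · exact h2

omit [Fintype Ω] in
theorem robustState_const (hn : 2 < n) (ω : Ω) : robustState hn (fun _ : Fin n => ω) = ω :=
  robustState_eq_of_forall_ne hn (i := ⟨0, by omega⟩) fun _ _ => rfl

def robustMech (hn : 2 < n) (o : Ω → ℝ) (ho0 : ∀ ω, 0 ≤ o ω) (ho1 : ∀ ω, o ω ≤ 1) :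
    Mech n Ω where
  send _ ω m := if m = ω then 1 else 0
  send_nonneg _ ω m := by split_ifs <;> norm_num
  send_sum_one _ _ := by simp
  med m := o (robustState hn m)
  med_nonneg _ := ho0 _
  med_le_one _ := ho1 _
  recv := id

section robustMech

variable (hn : 2 < n) {o : Ω → ℝ} (ho0 : ∀ ω, 0 ≤ o ω) (ho1 : ∀ ω, o ω ≤ 1)

theorem robustMech_honestSenders : (robustMech hn o ho0 ho1).HonestSenders :=
  fun _ _ _ => rfl

theorem robustMech_honest : (robustMech hn o ho0 ho1).Honest :=
  ⟨robustMech_honestSenders hn ho0 ho1, rfl⟩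

theorem robustMech_actFalse (m : Fin n → Ω) :
    (robustMech hn o ho0 ho1).actFalse m = o (robustState hn m) := by
  simp [Mech.actFalse, robustMech]

theorem robustMech_out : (robustMech hn o ho0 ho1).out = o := by
  funext ω
  rw [(robustMech_honestSenders hn ho0 ho1).out, robustMech_actFalse, robustState_const]

theorem robustMech_IC (G : IAGame n Ω) (hU : ∀ a, G.Uconst a ≤ G.EUout none o) :
    G.IC (robustMech hn o ho0 ho1) := by
  have hs := robustMech_honestSenders hn ho0 ho1
  refine ⟨G.EU_withRecv_le hs rfl ?_, fun i s h1 h2 => (G.EU_devSend_eq hs ?_ i s h1 h2 _).le⟩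
  · rwa [G.EU_eq_EUout_out hs, robustMech_out]
  · intro i ω m hm
    rw [robustMech_actFalse, robustMech_actFalse, robustState_const,
      robustState_eq_of_forall_ne hn hm]

end robustMech

/-- In an information aggregation game with more than two
senders, an outcome `o` is implementable by a truthful mechanism if and only
if `E_r(o) ≥ U_a` for every action `a`. -/
theorem statement2 {n : ℕ} {Ω : Type*} [Fintype Ω] [DecidableEq Ω]
    (hn : 2 < n) (G : IAGame n Ω) (o : Ω → ℝ)
    (ho0 : ∀ ω, 0 ≤ o ω) (ho1 : ∀ ω, o ω ≤ 1) :
    (∃ M : Mech n Ω, G.Truthful M ∧ M.out = o) ↔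
      (∀ a : Bool, G.Uconst a ≤ G.EUout none o) := by
  constructor
  · rintro ⟨M, hM, rfl⟩
    exact G.Uconst_le_EUout_out_of_truthful hM
  · intro hU
    exact ⟨robustMech hn o ho0 ho1,
      ⟨robustMech_honest hn ho0 ho1, robustMech_IC hn ho0 ho1 G hU⟩, robustMech_out hn ho0 ho1⟩
end

section
/- Let Γ = (S, A, Ω, p, u) be an information aggregation game with Ω = {ω¹,…,ω^m}, and let real numbers y_1,…,y_m be given. Then the following are equivalent: (i) for all i, j ∈ [m], if ω⃗^i ≺_k ω⃗^j or there exists an input m⃗ ∈ Ω^n with ω⃗^i ≺_k m⃗ ≺_k ω⃗^j, then y_i ≤ y_j; (ii) for all i, j ∈ [m], if ω^i ≤_k ω^j then y_i ≤ y_j. -/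
open Finset

variable {n : ℕ} {Ω : Type*} [Fintype Ω] [DecidableEq Ω]

namespace Relation

variable {α ι : Type*} {r : α → α → Prop} {e : ι → α}

/-- An `r`-chain has no two consecutive points outside `Set.range e`, so it visits the range at
least every second step. -/
theorem TransGen.pullback_of_endpoint_mem_range
    (hr : ∀ a b, r a b → a ∈ Set.range e ∨ b ∈ Set.range e) {i j : ι}
    (h : TransGen r (e i) (e j)) :
    TransGen (fun i j => r (e i) (e j) ∨ ∃ m, r (e i) m ∧ r m (e j)) i j := by
  set R : ι → ι → Prop := fun i j => r (e i) (e j) ∨ ∃ m, r (e i) m ∧ r m (e j)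
  suffices key : ∀ a, TransGen r a (e j) →
      (∀ i, a = e i → TransGen R i j) ∧ (∀ i, r (e i) a → TransGen R i j) from
    (key _ h).1 i rfl
  intro a ha
  induction ha using TransGen.head_induction_on with
  | @single a hstep =>
    exact ⟨fun i hi => .single (.inl (hi ▸ hstep)),
      fun i hi => .single (.inr ⟨a, hi, hstep⟩)⟩
  | @head a c hstep _ ih =>
    refine ⟨fun i hi => ih.2 i (hi ▸ hstep), fun i hi => ?_⟩
    rcases hr a c hstep with ⟨l, rfl⟩ | ⟨l, rfl⟩
    · exact .head (.inl hi) (ih.2 l hstep)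
    · exact .head (.inr ⟨a, hi, hstep⟩) (ih.1 l rfl)

end Relation

namespace IAGame

theorem Prec.pure_left_or_pure_right {G : IAGame n Ω} {k : ℕ} {m m' : Fin n → Ω}
    (h : G.Prec k m m') :
    m ∈ Set.range (fun ω (_ : Fin n) => ω) ∨ m' ∈ Set.range (fun ω (_ : Fin n) => ω) := by
  rcases h.2 with ⟨ω, rfl, -⟩ | ⟨ω, rfl, -⟩
  · exact .inl ⟨ω, rfl⟩
  · exact .inr ⟨ω, rfl⟩

end IAGame

/-- Lemma 4.  For real numbers `(y ω)_{ω ∈ Ω}` the following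
are equivalent: (i) whenever `ω⃗ ≺ₖ ω⃗'`, or `ω⃗ ≺ₖ m⃗ ≺ₖ ω⃗'` for some input
`m⃗`, one has `y ω ≤ y ω'`; (ii) whenever `ω ≤ₖ ω'` one has `y ω ≤ y ω'`. -/
theorem statement8 {n : ℕ} {Ω : Type*} [Fintype Ω] [DecidableEq Ω]
    (G : IAGame n Ω) (k : ℕ) (y : Ω → ℝ) :
    (∀ ω ω' : Ω,
        (G.Prec k (fun _ => ω) (fun _ => ω') ∨
          ∃ m : Fin n → Ω, G.Prec k (fun _ => ω) m ∧ G.Prec k m (fun _ => ω')) →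
        y ω ≤ y ω') ↔
      (∀ ω ω' : Ω, G.LeK k ω ω' → y ω ≤ y ω') := by
  constructor
  · intro hmono ω ω' hle
    have hchain := Relation.TransGen.pullback_of_endpoint_mem_range
      (e := fun ω (_ : Fin n) => ω) (fun _ _ => IAGame.Prec.pure_left_or_pure_right) hle
    have hy := Relation.TransGen.lift y (p := (· ≤ ·)) (fun _ _ => hmono _ _) _ _ hchain
    rwa [Relation.transGen_eq_self] at hy
  · rintro hmono ω ω' (hstep | ⟨m, h₁, h₂⟩)
    · exact hmono ω ω' (.single hstep)
    · exact hmono ω ω' ((Relation.TransGen.single h₁).tail h₂)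
end

section
/- Let Γ = (S, A, Ω, p, u) be an information aggregation game with n senders, let 1 ≤ k ≤ n, and let ω, ω' ∈ Ω be distinct states. Partition S into X_{0,1}^{0,1}, X_{0,1}^{1,0}, X_{1,0}^{0,1}, X_{1,0}^{1,0}, where X_{0,1}^{0,1} is the set of senders that weakly prefer 0 to 1 in ω and strictly prefer 0 to 1 in ω', X_{0,1}^{1,0} those that weakly prefer 0 to 1 in ω and weakly prefer 1 to 0 in ω', X_{1,0}^{0,1} those that strictly prefer 1 to 0 in ω and strictly prefer 0 to 1 in ω', and X_{1,0}^{1,0} those that strictly prefer 1 to 0 in ω and weakly prefer 1 to 0 in ω'. Then there exists an input m⃗ ∈ Ω^n with ω⃗ ≺_k m⃗ ≺_k ω⃗' if and only if X_{0,1}^{1,0} = ∅, 2k ≥ n, |X_{0,1}^{0,1}| ≤ k, and |X_{1,0}^{1,0}| ≤ k. -/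
open Finset

variable {n : ℕ} {Ω : Type*} [Fintype Ω] [DecidableEq Ω]

/-!
If `ω⃗ ≺ₖ m⃗ ≺ₖ ω⃗'`, let `A` be the set of senders with `m i ≠ ω`. Apart from degenerate
cases in which `n ≤ k` and `m⃗` is itself pure (and can be replaced by `ω⃗` or `ω⃗'`), the
senders in `A` strictly prefer `1` in `ω`, those outside `A` differ from `ω'` and so strictly
prefer `0` in `ω'`, and `A`, `Aᶜ` have at most `k` elements. Conversely such an `A` gives the
input reporting `ω'` on `A` and `ω` elsewhere. The existence of `A` is then a counting
question: `A` must contain `X₁₀¹⁰`, lie inside the senders preferring `1` in `ω`, and have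
between `n - k` and `k` elements.
-/

namespace Finset

theorem exists_partition_card_le_iff {ι : Type*} [Fintype ι] [DecidableEq ι]
    (p q : ι → Prop) [DecidablePred p] [DecidablePred q] (k : ℕ) :
    (∃ A : Finset ι, (∀ i ∈ A, p i) ∧ (∀ i ∉ A, q i) ∧ #A ≤ k ∧ #Aᶜ ≤ k) ↔
      ({i | ¬p i ∧ ¬q i} : Finset ι) = ∅ ∧ Fintype.card ι ≤ 2 * k ∧
        #{i | ¬p i ∧ q i} ≤ k ∧ #{i | p i ∧ ¬q i} ≤ k := by
  constructor
  · rintro ⟨A, hp, hq, hA, hAc⟩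
    refine ⟨filter_eq_empty_iff.2 fun i _ hi => ?_, ?_, ?_, ?_⟩
    · by_cases hiA : i ∈ A
      exacts [hi.1 (hp i hiA), hi.2 (hq i hiA)]
    · have := card_add_card_compl A
      omega
    · refine (card_le_card fun i hi => mem_compl.2 fun hiA => ?_).trans hAc
      exact (mem_filter.1 hi).2.1 (hp i hiA)
    · refine (card_le_card fun i hi => ?_).trans hA
      by_contra hiA
      exact (mem_filter.1 hi).2.2 (hq i hiA)
  · rintro ⟨hneither, hcard, hnp, hnq⟩
    have hcover : ∀ i, p i ∨ q i := fun i => by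
      by_contra h
      exact (filter_eq_empty_iff.1 hneither) (mem_univ i) (not_or.1 h)
    have hBP : ({i | p i ∧ ¬q i} : Finset ι) ⊆ ({i | p i} : Finset ι) :=
      monotone_filter_right _ fun _ _ h => h.1
    have hP : Fintype.card ι - k ≤ #{i | p i} := by
      have hsplit : #{i | p i} + #{i | ¬p i} = Fintype.card ι :=
        card_filter_add_card_filter_not p
      have : #{i | ¬p i} ≤ k :=
        (card_le_card (monotone_filter_right _ fun i _ h => ⟨h, (hcover i).resolve_left h⟩)).trans
          hnp
      omega
    obtain ⟨A, hBA, hAP, hA⟩ := exists_subsuperset_card_eq hBP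
      (le_max_left _ (Fintype.card ι - k)) (max_le (card_le_card hBP) hP)
    refine ⟨A, fun i hi => (mem_filter.1 (hAP hi)).2, fun i hi => ?_, ?_, ?_⟩
    · by_contra hq
      exact hi (hBA (mem_filter.2 ⟨mem_univ i, (hcover i).resolve_right hq, hq⟩))
    · rw [hA]
      omega
    · rw [card_compl, hA]
      omega

end Finset

@[simp]
theorem mem_diffSet {α : Type*} [DecidableEq α] {m m' : Fin n → α} {i : Fin n} :
    i ∈ diffSet m m' ↔ m i ≠ m' i := by
  simp [diffSet]

namespace IAGame

variable {G : IAGame n Ω} {k : ℕ}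

theorem Prec.const_left {ω : Ω} {m : Fin n → Ω} (h : G.Prec k (fun _ => ω) m) :
    (∀ i ∈ diffSet (fun _ => ω) m, G.SPrefers i ω true) ∨
      (n ≤ k ∧ ∃ ω₀, m = (fun _ => ω₀) ∧ ∀ i, G.SPrefers i ω₀ false) := by
  obtain ⟨hcard, ⟨σ, hσ, hall⟩ | ⟨ω₀, rfl, hall⟩⟩ := h
  · left
    intro i hi
    obtain rfl : ω = σ := congrFun hσ i
    exact hall i hi
  · by_cases h : ω = ω₀
    · left
      simp [h]
    · right
      have huniv : diffSet (fun _ : Fin n => ω) (fun _ => ω₀) = univ :=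
        eq_univ_of_forall fun _ => mem_diffSet.2 h
      rw [huniv, card_univ, Fintype.card_fin] at hcard
      exact ⟨hcard, ω₀, rfl, fun i => hall i (huniv ▸ mem_univ i)⟩

theorem Prec.const_right {ω' : Ω} {m : Fin n → Ω} (h : G.Prec k m (fun _ => ω')) :
    (∀ i ∈ diffSet m (fun _ => ω'), G.SPrefers i ω' false) ∨
      (n ≤ k ∧ ∃ ω₁, m = (fun _ => ω₁) ∧ ∀ i, G.SPrefers i ω₁ true) := by
  obtain ⟨hcard, ⟨ω₁, rfl, hall⟩ | ⟨σ, hσ, hall⟩⟩ := h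
  · by_cases h : ω₁ = ω'
    · left
      simp [h]
    · right
      have huniv : diffSet (fun _ : Fin n => ω₁) (fun _ => ω') = univ :=
        eq_univ_of_forall fun _ => mem_diffSet.2 h
      rw [huniv, card_univ, Fintype.card_fin] at hcard
      exact ⟨hcard, ω₁, rfl, fun i => hall i (huniv ▸ mem_univ i)⟩
  · left
    intro i hi
    obtain rfl : ω' = σ := congrFun hσ i
    exact hall i hi

theorem Prec.const_const {a b : Ω} (h : G.Prec k (fun _ => a) (fun _ => b)) (hab : a ≠ b)
    (i : Fin n) : G.SPrefers i a true ∨ G.SPrefers i b false := by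
  have hi : i ∈ diffSet (fun _ : Fin n => a) (fun _ => b) := mem_diffSet.2 hab
  obtain ⟨-, ⟨σ, hσ, hall⟩ | ⟨σ, hσ, hall⟩⟩ := h
  · obtain rfl : a = σ := congrFun hσ i
    exact .inl (hall i hi)
  · obtain rfl : b = σ := congrFun hσ i
    exact .inr (hall i hi)

theorem exists_prec_prec_iff {ω ω' : Ω} (hne : ω ≠ ω') :
    (∃ m : Fin n → Ω, G.Prec k (fun _ => ω) m ∧ G.Prec k m (fun _ => ω')) ↔
      ∃ A : Finset (Fin n), (∀ i ∈ A, G.SPrefers i ω true) ∧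
        (∀ i ∉ A, G.SPrefers i ω' false) ∧ #A ≤ k ∧ #Aᶜ ≤ k := by
  constructor
  · rintro ⟨m, h₁, h₂⟩
    rcases h₁.const_left with hA | ⟨hn, ω₀, rfl, h₀⟩
    · rcases h₂.const_right with hB | ⟨hn, ω₁, rfl, h₁'⟩
      · have hsub : (diffSet (fun _ => ω) m)ᶜ ⊆ diffSet m (fun _ => ω') := fun i hi => by
          simp only [mem_compl, mem_diffSet, not_not] at hi ⊢
          rwa [← hi]
        exact ⟨diffSet (fun _ => ω) m, hA, fun i hi => hB i (hsub (mem_compl.2 hi)), h₁.1,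
          (card_le_card hsub).trans h₂.1⟩
      · refine ⟨univ, fun i _ => ?_, by simp, by simpa using hn, by simp⟩
        by_cases h : ω = ω₁
        · exact h ▸ h₁' i
        · exact (h₁.const_const h i).resolve_right (lt_asymm (h₁' i))
    · refine ⟨∅, by simp, fun i _ => ?_, by simp, by simpa using hn⟩
      by_cases h : ω₀ = ω'
      · exact h ▸ h₀ i
      · exact (h₂.const_const h i).resolve_left (lt_asymm (h₀ i))
  · rintro ⟨A, hA, hAc, hcard, hcardc⟩
    have hleft : diffSet (fun _ => ω) (fun i => if i ∈ A then ω' else ω) = A := by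
      ext i
      by_cases hi : i ∈ A <;> simp [hi, hne]
    have hright : diffSet (fun i => if i ∈ A then ω' else ω) (fun _ => ω') = Aᶜ := by
      ext i
      by_cases hi : i ∈ A <;> simp [hi, hne]
    refine ⟨fun i => if i ∈ A then ω' else ω, ⟨?_, .inl ⟨ω, rfl, ?_⟩⟩, ⟨?_, .inr ⟨ω', rfl, ?_⟩⟩⟩
    · rwa [hleft]
    · rwa [hleft]
    · rwa [hright]
    · simpa [hright] using hAc

end IAGame

open scoped Classical in
theorem statement10_general {n : ℕ} {Ω : Type*} [Fintype Ω] [DecidableEq Ω]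
    (G : IAGame n Ω) (k : ℕ)
    (ω ω' : Ω) (hne : ω ≠ ω') :
    (∃ m : Fin n → Ω, G.Prec k (fun _ => ω) m ∧ G.Prec k m (fun _ => ω')) ↔
      ((Finset.univ.filter fun i => G.WPrefers i ω false ∧ G.WPrefers i ω' true)
          = ∅ ∧
        n ≤ 2 * k ∧
        (Finset.univ.filter fun i =>
          G.WPrefers i ω false ∧ G.SPrefers i ω' false).card ≤ k ∧
        (Finset.univ.filter fun i =>
          G.SPrefers i ω true ∧ G.WPrefers i ω' true).card ≤ k) := by
  have hW : ∀ i σ a, G.WPrefers i σ a ↔ ¬G.SPrefers i σ (!a) := by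
    intro i σ a
    cases a <;> exact not_lt.symm
  simp only [hW, Bool.not_false, Bool.not_true]
  rw [IAGame.exists_prec_prec_iff hne, Finset.exists_partition_card_le_iff, Fintype.card_fin]

open scoped Classical in
/-- For distinct states `ω ≠ ω'` and `1 ≤ k ≤ n`, partition
the senders into `X₀₁⁰¹` (weakly prefer `0` in `ω`, strictly prefer `0` in
`ω'`), `X₀₁¹⁰` (weakly prefer `0` in `ω`, weakly prefer `1` in `ω'`), `X₁₀⁰¹`
(strictly prefer `1` in `ω`, strictly prefer `0` in `ω'`) and `X₁₀¹⁰`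
(strictly prefer `1` in `ω`, weakly prefer `1` in `ω'`).  There exists an
input `m⃗` with `ω⃗ ≺ₖ m⃗ ≺ₖ ω⃗'` if and only if `X₀₁¹⁰ = ∅`, `2k ≥ n`,
`|X₀₁⁰¹| ≤ k` and `|X₁₀¹⁰| ≤ k`. -/
theorem statement10 {n : ℕ} {Ω : Type*} [Fintype Ω] [DecidableEq Ω]
    (G : IAGame n Ω) (k : ℕ) (hk1 : 1 ≤ k) (hkn : k ≤ n)
    (ω ω' : Ω) (hne : ω ≠ ω') :
    (∃ m : Fin n → Ω, G.Prec k (fun _ => ω) m ∧ G.Prec k m (fun _ => ω')) ↔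
      ((Finset.univ.filter fun i => G.WPrefers i ω false ∧ G.WPrefers i ω' true)
          = ∅ ∧
        n ≤ 2 * k ∧
        (Finset.univ.filter fun i =>
          G.WPrefers i ω false ∧ G.SPrefers i ω' false).card ≤ k ∧
        (Finset.univ.filter fun i =>
          G.SPrefers i ω true ∧ G.WPrefers i ω' true).card ≤ k) :=
  statement10_general G k ω ω' hne
end
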